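/- The standard middle-thirds Cantor set has Hausdorff dimension log 2 / log 3, and more generally the self-similar Cantor set generated by the two contractions f₀(x) = a·x and f₁(x) = a·x + (1-a) with 0 < a < 1/2 has Hausdorff dimension log 2 / log(1/a). -/

import Mathlib

/-!
Upper bound: the `2ⁿ` images of `C` under the `n`-fold compositions of the two maps cover `C`
and have diameter at most `aⁿ · diam C`, while `2ⁿ (aⁿ)^d = 1` for `d = log 2 / log a⁻¹`.

Lower bound: each address `w ∈ {0,1}^ℕ` gives the point `codingMap a w = ∑ wₖ (1 - a) aᵏ` of
`C`, and addresses first differing at index `n` give points at distance at least `aⁿ (1 - 2a)`,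
the gap between the two halves at level `n`. Hence the map `codingMap a w ↦ 0.w₀w₁…` (binary) is
`d`-Hölder on `C`, and its image is `[0, 1]`, of dimension `1`.
-/

open Set Metric MeasureTheory Real Filter Topology
open scoped ENNReal NNReal

section WordImage

variable {X ι : Type*} (f : ι → X → X)

def wordImage (K : Set X) : {n : ℕ} → (Fin n → ι) → Set X
  | 0, _ => K
  | _ + 1, w => f (w 0) '' wordImage K (Fin.tail w)

variable {f}

theorem subset_iUnion_wordImage {C : Set X} (hC : C ⊆ ⋃ i, f i '' C) :
    ∀ n, C ⊆ ⋃ w : Fin n → ι, wordImage f C w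
  | 0 => fun x hx => mem_iUnion.2 ⟨Fin.elim0, hx⟩
  | n + 1 => fun x hx => by
    obtain ⟨i, y, hy, rfl⟩ : ∃ i, ∃ y ∈ C, f i y = x := by simpa using hC hx
    obtain ⟨w, hw⟩ := mem_iUnion.1 (subset_iUnion_wordImage hC n hy)
    exact mem_iUnion.2 ⟨Fin.cons i w, by simpa [wordImage] using mem_image_of_mem (f i) hw⟩

variable [EMetricSpace X]

theorem ediam_wordImage_le {r : ℝ≥0} (hf : ∀ i, LipschitzWith r (f i)) (K : Set X) :
    ∀ {n} (w : Fin n → ι), ediam (wordImage f K w) ≤ r ^ n * ediam K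
  | 0, _ => by simp [wordImage]
  | n + 1, w => calc
      ediam (wordImage f K w) ≤ r * ediam (wordImage f K (Fin.tail w)) :=
        (hf (w 0)).ediam_image_le _
      _ ≤ r * (r ^ n * ediam K) := by gcongr; exact ediam_wordImage_le hf K _
      _ = r ^ (n + 1) * ediam K := by ring

theorem hausdorffMeasure_le_ediam_rpow [MeasurableSpace X] [BorelSpace X] [Fintype ι]
    {C : Set X} (hC : C ⊆ ⋃ i, f i '' C) (hCb : ediam C ≠ ∞) {r : ℝ≥0}
    (hf : ∀ i, LipschitzWith r (f i)) (hr : r < 1) {d : ℝ} (hd : 0 ≤ d)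
    (hrd : Fintype.card ι * (r : ℝ≥0∞) ^ d = 1) :
    μH[d] C ≤ ediam C ^ d := by
  have hlim : Tendsto (fun n : ℕ => (r : ℝ≥0∞) ^ n * ediam C) atTop (𝓝 0) := by
    simpa using ENNReal.Tendsto.mul_const
      (ENNReal.tendsto_pow_atTop_nhds_zero_of_lt_one (ENNReal.coe_lt_one_iff.2 hr)) (.inr hCb)
  have hsum (n : ℕ) : ∑ w : Fin n → ι, ediam (wordImage f C w) ^ d ≤ ediam C ^ d := calc
    ∑ w : Fin n → ι, ediam (wordImage f C w) ^ d
        ≤ ∑ _w : Fin n → ι, ((r : ℝ≥0∞) ^ n * ediam C) ^ d :=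
      Finset.sum_le_sum fun w _ => ENNReal.rpow_le_rpow (ediam_wordImage_le hf C w) hd
    _ = (Fintype.card ι * (r : ℝ≥0∞) ^ d) ^ n * ediam C ^ d := by
      rw [Finset.sum_const, Finset.card_univ, Fintype.card_fun, Fintype.card_fin, nsmul_eq_mul,
        ENNReal.mul_rpow_of_nonneg _ _ hd, ← ENNReal.rpow_natCast, ← ENNReal.rpow_mul,
        mul_comm (n : ℝ), ENNReal.rpow_mul, ENNReal.rpow_natCast, mul_pow]
      push_cast
      ring
    _ = ediam C ^ d := by rw [hrd, one_pow, one_mul]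
  calc μH[d] C ≤ liminf (fun n => ∑ w : Fin n → ι, ediam (wordImage f C w) ^ d) atTop :=
        Measure.hausdorffMeasure_le_liminf_sum d C _ hlim (fun n w => wordImage f C w)
          (.of_forall fun n => ediam_wordImage_le hf C) (.of_forall (subset_iUnion_wordImage hC))
    _ ≤ ediam C ^ d := liminf_le_of_frequently_le' (.of_forall hsum)

end WordImage

def cantorMap (a : ℝ) (i : Fin 2) (x : ℝ) : ℝ := a * x + i * (1 - a)

noncomputable def codingMap (a : ℝ) (w : ℕ → Fin 2) : ℝ := ∑' k, w k * (1 - a) * a ^ k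

variable {a : ℝ}

theorem iUnion_image_cantorMap (C : Set ℝ) :
    ⋃ i, cantorMap a i '' C = (fun x => a * x) '' C ∪ (fun x => a * x + (1 - a)) '' C := by
  ext x
  simp [cantorMap, Fin.exists_fin_two]

theorem dist_cantorMap (ha : 0 ≤ a) (i : Fin 2) (x y : ℝ) :
    dist (cantorMap a i x) (cantorMap a i y) = a * dist x y := by
  simp [cantorMap, dist_eq, ← mul_sub, abs_mul, abs_of_nonneg ha]

theorem lipschitzWith_cantorMap (ha : 0 ≤ a) (i : Fin 2) :
    LipschitzWith a.toNNReal (cantorMap a i) :=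
  .of_dist_le_mul fun x y => by rw [dist_cantorMap ha, coe_toNNReal a ha]

theorem fin_two_cast_eq_zero_or_one (i : Fin 2) : (i : ℝ) = 0 ∨ (i : ℝ) = 1 := by
  fin_cases i <;> simp

section Coding

variable (ha0 : 0 ≤ a) (ha1 : a < 1)
include ha0 ha1

theorem codingTerm_nonneg (i : Fin 2) (k : ℕ) : 0 ≤ (i : ℝ) * (1 - a) * a ^ k := by
  rcases fin_two_cast_eq_zero_or_one i with h | h <;> rw [h] <;> nlinarith [pow_nonneg ha0 k]

theorem codingTerm_le (i : Fin 2) (k : ℕ) : (i : ℝ) * (1 - a) * a ^ k ≤ (1 - a) * a ^ k := by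
  rcases fin_two_cast_eq_zero_or_one i with h | h <;> rw [h] <;> nlinarith [pow_nonneg ha0 k]

theorem summable_codingTerm (w : ℕ → Fin 2) : Summable fun k => (w k : ℝ) * (1 - a) * a ^ k :=
  .of_nonneg_of_le (fun k => codingTerm_nonneg ha0 ha1 (w k) k)
    (fun k => codingTerm_le ha0 ha1 (w k) k)
    ((summable_geometric_of_lt_one ha0 ha1).mul_left (1 - a))

theorem codingMap_mem_Icc (w : ℕ → Fin 2) : codingMap a w ∈ Icc 0 1 := by
  refine ⟨tsum_nonneg fun k => codingTerm_nonneg ha0 ha1 (w k) k, ?_⟩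
  calc codingMap a w ≤ ∑' k, (1 - a) * a ^ k :=
        (summable_codingTerm ha0 ha1 w).tsum_le_tsum (fun k => codingTerm_le ha0 ha1 (w k) k)
          ((summable_geometric_of_lt_one ha0 ha1).mul_left (1 - a))
    _ = 1 := by
      rw [tsum_mul_left, tsum_geometric_of_lt_one ha0 ha1, mul_inv_cancel₀ (by linarith)]

theorem codingMap_eq_cantorMap (w : ℕ → Fin 2) :
    codingMap a w = cantorMap a (w 0) (codingMap a fun k => w (k + 1)) := by
  rw [codingMap, (summable_codingTerm ha0 ha1 w).tsum_eq_zero_add, codingMap, cantorMap,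
    ← tsum_mul_left]
  simp only [pow_zero, pow_succ]
  ring_nf

end Coding

section Attractor

variable {C : Set ℝ} (ha0 : 0 ≤ a) (ha1 : a < 1) (hC : ∀ i, cantorMap a i '' C ⊆ C)
include ha0 ha1 hC

theorem exists_mem_dist_codingMap_le {c : ℝ} (hc : c ∈ C) :
    ∀ (n : ℕ) (w : ℕ → Fin 2), ∃ y ∈ C, dist y (codingMap a w) ≤ a ^ n * (|c| + 1)
  | 0, w => ⟨c, hc, by
      obtain ⟨h0, h1⟩ := codingMap_mem_Icc ha0 ha1 w
      rw [pow_zero, one_mul, dist_eq]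
      exact (abs_sub _ _).trans (by rw [abs_of_nonneg h0]; linarith)⟩
  | n + 1, w => by
      obtain ⟨y, hy, hdist⟩ := exists_mem_dist_codingMap_le hc n fun k => w (k + 1)
      refine ⟨cantorMap a (w 0) y, hC _ (mem_image_of_mem _ hy), ?_⟩
      rw [codingMap_eq_cantorMap ha0 ha1 w, dist_cantorMap ha0, pow_succ', mul_assoc]
      exact mul_le_mul_of_nonneg_left hdist ha0

theorem range_codingMap_subset (hCc : IsClosed C) (hne : C.Nonempty) :
    range (codingMap a) ⊆ C := by
  rintro _ ⟨w, rfl⟩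
  obtain ⟨c, hc⟩ := hne
  refine hCc.closure_subset (Metric.mem_closure_iff.2 fun ε hε => ?_)
  obtain ⟨n, hn⟩ := exists_pow_lt_of_lt_one (div_pos hε (by positivity : 0 < |c| + 1)) ha1
  obtain ⟨y, hy, hdist⟩ := exists_mem_dist_codingMap_le ha0 ha1 hC hc n w
  exact ⟨y, hy, by rw [dist_comm]; exact hdist.trans_lt ((lt_div_iff₀ (by positivity)).1 hn)⟩

end Attractor

theorem one_sub_two_mul_le_dist_cantorMap {i j : Fin 2} (hij : i ≠ j) {x y : ℝ}
    (hx : x ∈ Icc 0 1) (hy : y ∈ Icc 0 1) (ha0 : 0 ≤ a) :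
    1 - 2 * a ≤ dist (cantorMap a i x) (cantorMap a j y) := by
  obtain ⟨hx0, hx1⟩ := hx
  obtain ⟨hy0, hy1⟩ := hy
  fin_cases i <;> fin_cases j <;> simp only [ne_eq, not_true_eq_false] at hij <;>
    simp only [cantorMap, dist_eq, le_abs] <;> norm_num
  · right; nlinarith
  · left; nlinarith

theorem pow_mul_le_dist_codingMap (ha0 : 0 ≤ a) (ha1 : a < 1) :
    ∀ (n : ℕ) {w v : ℕ → Fin 2}, (∀ k < n, w k = v k) → w n ≠ v n →
      a ^ n * (1 - 2 * a) ≤ dist (codingMap a w) (codingMap a v)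
  | 0, w, v, _, hwv => by
    rw [codingMap_eq_cantorMap ha0 ha1 w, codingMap_eq_cantorMap ha0 ha1 v, pow_zero, one_mul]
    exact one_sub_two_mul_le_dist_cantorMap hwv (codingMap_mem_Icc ha0 ha1 _)
      (codingMap_mem_Icc ha0 ha1 _) ha0
  | n + 1, w, v, hlt, hwv => by
    rw [codingMap_eq_cantorMap ha0 ha1 w, codingMap_eq_cantorMap ha0 ha1 v, hlt 0 n.succ_pos,
      dist_cantorMap ha0, pow_succ', mul_assoc]
    exact mul_le_mul_of_nonneg_left
      (pow_mul_le_dist_codingMap ha0 ha1 n (fun k hk => hlt (k + 1) (by omega)) hwv) ha0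

section Holder

variable (ha0 : 0 < a) (ha : a < 1 / 2)
include ha0 ha

theorem pow_firstDiff_mul_le_dist_codingMap {w v : ℕ → Fin 2} (hwv : w ≠ v) :
    a ^ PiNat.firstDiff w v * (1 - 2 * a) ≤ dist (codingMap a w) (codingMap a v) :=
  pow_mul_le_dist_codingMap ha0.le (by linarith) _
    (fun _ hk => PiNat.apply_eq_of_lt_firstDiff hk) (PiNat.apply_firstDiff_ne hwv)

theorem codingMap_injective : Function.Injective (codingMap a) := fun w v h => by
  by_contra hwv
  have := pow_firstDiff_mul_le_dist_codingMap ha0 ha hwv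
  rw [h, dist_self] at this
  nlinarith [pow_pos ha0 (PiNat.firstDiff w v)]

theorem dist_ofDigits_le_mul_dist_codingMap_rpow {d : ℝ} (hd : 0 ≤ d) (had : a ^ d = 2⁻¹)
    (w v : ℕ → Fin 2) :
    dist (ofDigits w) (ofDigits v) ≤
      (1 - 2 * a)⁻¹ ^ d * dist (codingMap a w) (codingMap a v) ^ d := by
  have h2a : 0 < 1 - 2 * a := by linarith
  rcases eq_or_ne w v with rfl | hwv
  · rw [dist_self]; positivity
  calc dist (ofDigits w) (ofDigits v) ≤ (((2 : ℕ) : ℝ) ^ PiNat.firstDiff w v)⁻¹ :=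
        abs_ofDigits_sub_ofDigits_le fun _ hk => PiNat.apply_eq_of_lt_firstDiff hk
    _ = (a ^ PiNat.firstDiff w v) ^ d := by rw [← rpow_pow_comm ha0.le, had, inv_pow]; norm_num
    _ ≤ ((1 - 2 * a)⁻¹ * dist (codingMap a w) (codingMap a v)) ^ d := by
        gcongr
        rw [inv_mul_eq_div, le_div_iff₀ h2a]
        exact pow_firstDiff_mul_le_dist_codingMap ha0 ha hwv
    _ = (1 - 2 * a)⁻¹ ^ d * dist (codingMap a w) (codingMap a v) ^ d :=
        mul_rpow (by positivity) dist_nonneg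

theorem holderOnWith_ofDigits_invFun_codingMap {d : ℝ≥0} (had : a ^ (d : ℝ) = 2⁻¹) :
    HolderOnWith ((1 - 2 * a)⁻¹ ^ (d : ℝ)).toNNReal d
      (ofDigits ∘ Function.invFun (codingMap a)) (range (codingMap a)) := by
  rintro _ ⟨w, rfl⟩ _ ⟨v, rfl⟩
  have hinv := Function.leftInverse_invFun (codingMap_injective ha0 ha)
  rw [Function.comp_apply, Function.comp_apply, hinv w, hinv v, edist_dist, edist_dist,
    ENNReal.ofReal_rpow_of_nonneg dist_nonneg d.coe_nonneg]
  exact (ENNReal.ofReal_le_ofReal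
    (dist_ofDigits_le_mul_dist_codingMap_rpow ha0 ha d.coe_nonneg had w v)).trans_eq
      (ENNReal.ofReal_mul (rpow_nonneg (inv_nonneg.2 (by linarith)) _))

theorem le_dimH_range_codingMap {d : ℝ≥0} (hd : 0 < d) (had : a ^ (d : ℝ) = 2⁻¹) :
    (d : ℝ≥0∞) ≤ dimH (range (codingMap a)) := by
  have hIcc : Icc 0 1 ⊆ (ofDigits ∘ Function.invFun (codingMap a)) '' range (codingMap a) := by
    intro x hx
    obtain ⟨w, -, rfl⟩ := ofDigits_SurjOn (b := 2) one_lt_two hx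
    exact ⟨codingMap a w, mem_range_self w, by
      simp [Function.leftInverse_invFun (codingMap_injective ha0 ha) w]⟩
  have : 1 ≤ dimH (range (codingMap a)) / d := calc
    1 = dimH (Icc (0 : ℝ) 1) := by rw [Real.dimH_of_nonempty_interior (by simp)]; simp
    _ ≤ _ := dimH_mono hIcc
    _ ≤ dimH (range (codingMap a)) / d :=
        (holderOnWith_ofDigits_invFun_codingMap ha0 ha had).dimH_image_le hd
  rwa [ENNReal.le_div_iff_mul_le (.inl (by simpa using hd.ne')) (.inl (by simp)),
    one_mul] at this

end Holder

theorem rpow_log_div_log_inv {a b : ℝ} (ha0 : 0 < a) (ha1 : a ≠ 1) (hb : 0 < b) :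
    a ^ (log b / log a⁻¹) = b⁻¹ := by
  have hlog : log a ≠ 0 := log_ne_zero_of_pos_of_ne_one ha0 ha1
  rw [rpow_def_of_pos ha0, log_inv, mul_div_assoc', div_neg, mul_div_cancel_left₀ _ hlog,
    exp_neg, exp_log hb]

open Real in
theorem stmt_11_general (a : ℝ) (ha0 : 0 < a) (ha : a < 1 / 2) (C : Set ℝ)
    (hne : C.Nonempty) (hcomp : IsCompact C)
    (hself : C = (fun x => a * x) '' C ∪ (fun x => a * x + (1 - a)) '' C) :
    dimH C = ENNReal.ofReal (Real.log 2 / Real.log a⁻¹) := by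
  have ha1 : a < 1 := by linarith
  have hpos : 0 < log 2 / log a⁻¹ :=
    div_pos (log_pos one_lt_two) (log_pos (one_lt_inv_iff₀.2 ⟨ha0, ha1⟩))
  set d : ℝ≥0 := ⟨_, hpos.le⟩
  have had : a ^ (d : ℝ) = 2⁻¹ := rpow_log_div_log_inv ha0 ha1.ne two_pos
  have hrd : (Fintype.card (Fin 2) : ℝ≥0∞) * (a.toNNReal : ℝ≥0∞) ^ (d : ℝ) = 1 := by
    change _ * ENNReal.ofReal a ^ (d : ℝ) = 1
    rw [ENNReal.ofReal_rpow_of_pos ha0, had]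
    simpa using ENNReal.mul_inv_cancel two_ne_zero ENNReal.ofNat_ne_top
  rw [← iUnion_image_cantorMap] at hself
  rw [show log 2 / log a⁻¹ = d from rfl, ENNReal.ofReal_coe_nnreal]
  refine le_antisymm (dimH_le_of_hausdorffMeasure_ne_top ?_) ?_
  · have hCb := hcomp.isBounded.ediam_ne_top
    exact ne_top_of_le_ne_top (ENNReal.rpow_ne_top_of_nonneg d.coe_nonneg hCb)
      (hausdorffMeasure_le_ediam_rpow hself.le hCb
        (lipschitzWith_cantorMap ha0.le) (by simpa using ha1) d.coe_nonneg hrd)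
  · exact (le_dimH_range_codingMap ha0 ha hpos had).trans <| dimH_mono <|
      range_codingMap_subset ha0.le ha1 (fun i => (subset_iUnion _ i).trans hself.ge)
        hcomp.isClosed hne

open Real in
/-- The self-similar Cantor set generated by `x ↦ a·x` and `x ↦ a·x + (1-a)`,
`0 < a < 1/2`, has Hausdorff dimension `log 2 / log (1/a)`; for `a = 1/3` this is
the middle-thirds Cantor set with dimension `log 2 / log 3`. -/
theorem stmt_11 (a : ℝ) (ha0 : 0 < a) (ha : a < 1 / 2) (C : Set ℝ)
    (hne : C.Nonempty) (hcomp : IsCompact C) (hsub : C ⊆ Set.Icc 0 1)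
    (hself : C = (fun x => a * x) '' C ∪ (fun x => a * x + (1 - a)) '' C) :
    dimH C = ENNReal.ofReal (Real.log 2 / Real.log a⁻¹) :=
  stmt_11_general a ha0 ha C hne hcomp hself
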